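/- Let μ = (μ₁,...,μ_r) be a system of real measures with all moments finite, n a normal multi-index with type II polynomial P_n, and z₀ ∈ ℂ \ ℝ with P_n(z₀) = 0. Then n is not normal for the system (|x−z₀|²μ₁,...,|x−z₀|²μ_r), where |x−z₀|²μ_j is the positive-weight transform d(|x−z₀|²μ_j)(x) = (x−z₀)(x−z̄₀) dμ_j(x). -/

import Mathlib

open Polynomial MeasureTheory

/-! If `P = q Q` is a type II polynomial for `μ` and `q` is the real quadratic with roots `z₀`
and `z̄₀`, then `Q` is a nonzero polynomial of degree `|n| - 2` satisfying all the orthogonality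
conditions of the system `q μ`. Adding it to a type II polynomial of `q μ` produces a second one,
so the type II polynomial of `q μ` at `n` cannot be unique. -/

def IsTypeII {r : ℕ} (μ : Fin r → Measure ℝ) (w : Fin r → ℝ → ℝ) (n : Fin r → ℕ)
    (P : Polynomial ℝ) : Prop :=
  P.Monic ∧ P.natDegree = ∑ j, n j ∧
    ∀ j, ∀ k < n j, ∫ x : ℝ, P.eval x * x ^ k * w j x ∂(μ j) = 0

def NormalII {r : ℕ} (μ : Fin r → Measure ℝ) (w : Fin r → ℝ → ℝ) (n : Fin r → ℕ) : Prop :=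
  ∃! P : Polynomial ℝ, IsTypeII μ w n P

theorem Polynomial.integrable_eval_of_integrable_pow {ν : Measure ℝ}
    (hmom : ∀ k : ℕ, Integrable (fun x : ℝ => x ^ k) ν) (p : ℝ[X]) :
    Integrable (fun x => p.eval x) ν := by
  induction p using Polynomial.induction_on' with
  | add p q hp hq => simp only [eval_add]; exact hp.add hq
  | monomial i a => simpa [eval_monomial] using (hmom i).const_mul a

section TypeII

variable {r : ℕ} {μ : Fin r → Measure ℝ} {w : Fin r → ℝ → ℝ} {n : Fin r → ℕ}

theorem IsTypeII.add_of_orthogonal {P Q : ℝ[X]} (hP : IsTypeII μ w n P)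
    (hdeg : Q.degree < P.degree)
    (hint : ∀ j, ∀ p : ℝ[X], Integrable (fun x => p.eval x * w j x) (μ j))
    (horth : ∀ j, ∀ k < n j, ∫ x : ℝ, Q.eval x * x ^ k * w j x ∂(μ j) = 0) :
    IsTypeII μ w n (P + Q) := by
  obtain ⟨hmonic, hnatDeg, hPorth⟩ := hP
  refine ⟨hmonic.add_of_left hdeg, ?_, fun j k hk => ?_⟩
  · rw [natDegree_add_eq_left_of_degree_lt hdeg, hnatDeg]
  · have hint' (p : ℝ[X]) : Integrable (fun x => p.eval x * x ^ k * w j x) (μ j) := by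
      convert hint j (p * X ^ k) using 2 with x
      rw [eval_mul, eval_pow, eval_X]
    simp only [eval_add, add_mul]
    rw [integral_add (hint' P) (hint' Q), hPorth j k hk, horth j k hk, add_zero]

theorem not_normalII_of_orthogonal {Q : ℝ[X]} (hQ : Q ≠ 0) (hdeg : Q.natDegree < ∑ j, n j)
    (hint : ∀ j, ∀ p : ℝ[X], Integrable (fun x => p.eval x * w j x) (μ j))
    (horth : ∀ j, ∀ k < n j, ∫ x : ℝ, Q.eval x * x ^ k * w j x ∂(μ j) = 0) :
    ¬ NormalII μ w n := by
  rintro ⟨P, hP, huniq⟩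
  have hdeg' : Q.degree < P.degree := degree_lt_degree (hP.2.1 ▸ hdeg)
  exact hQ (left_eq_add.mp (huniq _ (hP.add_of_orthogonal hdeg' hint horth)).symm)

end TypeII

theorem stmt7_general (r : ℕ) (μ : Fin r → Measure ℝ)
    (hmom : ∀ j, ∀ k : ℕ, Integrable (fun x : ℝ => x ^ k) (μ j))
    (n : Fin r → ℕ) (P : Polynomial ℝ)
    (hP : IsTypeII μ (fun _ _ => 1) n P)
    (z₀ : ℂ) (hz₀ : z₀.im ≠ 0) (hroot : Polynomial.aeval z₀ P = 0) :
    ¬ NormalII μ (fun _ x => (x - z₀.re) ^ 2 + z₀.im ^ 2) n := by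
  obtain ⟨hmonic, hnatDeg, horth⟩ := hP
  set q : ℝ[X] := X ^ 2 - C (2 * z₀.re) * X + C (‖z₀‖ ^ 2) with hq
  have hq_eval (x : ℝ) : q.eval x = (x - z₀.re) ^ 2 + z₀.im ^ 2 := by
    simp only [q, eval_add, eval_sub, eval_mul, eval_pow, eval_X, eval_C, Complex.sq_norm,
      Complex.normSq_apply]
    ring
  have hq_monic : q.Monic := by rw [hq]; monicity!
  have hq_natDeg : q.natDegree = 2 := by rw [hq]; compute_degree!
  obtain ⟨Q, rfl⟩ : q ∣ P := quadratic_dvd_of_aeval_eq_zero_im_ne_zero P hroot hz₀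
  have hQ : Q ≠ 0 := by rintro rfl; simp at hmonic
  have hQ_natDeg : Q.natDegree + 2 = ∑ j, n j := by
    rw [← hnatDeg, natDegree_mul hq_monic.ne_zero hQ, hq_natDeg, add_comm]
  refine not_normalII_of_orthogonal hQ (by omega) (fun j p => ?_) (fun j k hk => ?_)
  · simpa only [eval_mul, hq_eval] using integrable_eval_of_integrable_pow (hmom j) (p * q)
  · convert horth j k hk using 3 with x
    rw [eval_mul, hq_eval, mul_one]
    ring

/-- If `n` is normal for the real system `μ` with type II polynomial `P` and `z₀ ∈ ℂ \ ℝ`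
is a zero of `P`, then `n` is not normal for the transformed system
`(|x-z₀|²μ₁, ..., |x-z₀|²μ_r)`, where `|x-z₀|² = (x - Re z₀)² + (Im z₀)²`. -/
theorem stmt7 (r : ℕ) (μ : Fin r → Measure ℝ)
    (hmom : ∀ j, ∀ k : ℕ, Integrable (fun x : ℝ => x ^ k) (μ j))
    (n : Fin r → ℕ) (P : Polynomial ℝ)
    (hnorm : NormalII μ (fun _ _ => 1) n) (hP : IsTypeII μ (fun _ _ => 1) n P)
    (z₀ : ℂ) (hz₀ : z₀.im ≠ 0) (hroot : Polynomial.aeval z₀ P = 0) :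
    ¬ NormalII μ (fun _ x => (x - z₀.re) ^ 2 + z₀.im ^ 2) n :=
  stmt7_general r μ hmom n P hP z₀ hz₀ hroot
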